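/- Let a = 2^k for some k ≥ 1. Then for any integer f with a/2 < f < a, we have Λ(f) + Λ(a−f) + (a−f) < Λ(a). -/

import Mathlib

/-- `U` induces a disjoint union of chains such that any two elements belonging to different
chains are incomparable; equivalently, comparability restricted to `U` is transitive
(so the comparability graph induced on `U` is a vertex-disjoint union of cliques). -/
def IsChainUnion {α : Type*} [PartialOrder α] (U : Finset α) : Prop :=
  ∀ x ∈ U, ∀ y ∈ U, ∀ z ∈ U,
    (x ≤ y ∨ y ≤ x) → (y ≤ z ∨ z ≤ y) → (x ≤ z ∨ z ≤ x)

/-- `ao α`: the maximum cardinality of a subset of the finite poset `α` that is a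
disjoint union of chains with elements of different chains incomparable. -/
noncomputable def ao (α : Type*) [Fintype α] [PartialOrder α] : ℕ :=
  sSup {m | ∃ U : Finset α, IsChainUnion U ∧ U.card = m}

/-- The height of a finite poset: the maximum size of a chain. -/
noncomputable def heightP (α : Type*) [Fintype α] [PartialOrder α] : ℕ :=
  sSup {m | ∃ C : Finset α, IsChain (· ≤ ·) (↑C : Set α) ∧ C.card = m}

/-- The width of a finite poset: the maximum size of an antichain. -/
noncomputable def widthP (α : Type*) [Fintype α] [PartialOrder α] : ℕ :=
  sSup {m | ∃ A : Finset α, IsAntichain (· ≤ ·) (↑A : Set α) ∧ A.card = m}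

/-- The cover graph of a poset: `x` and `y` are adjacent iff one covers the other. -/
def coverGraph (α : Type*) [PartialOrder α] : SimpleGraph α where
  Adj x y := x ⋖ y ∨ y ⋖ x
  symm := ⟨fun x y h => h.symm⟩
  loopless := ⟨fun x h => by rcases h with h | h <;> exact absurd h.lt (lt_irrefl x)⟩

/-- A poset is acyclic if its cover graph has no cycles. -/
def AcyclicPoset (α : Type*) [PartialOrder α] : Prop := (coverGraph α).IsAcyclic

/-- A poset is connected if its cover graph is connected. -/
def ConnectedPoset (α : Type*) [PartialOrder α] : Prop := (coverGraph α).Connected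

/-- A poset is `N`-free if there are no `p1, p2, p3, p4` with `p1 > p3`, `p1 > p4`, `p2 > p4`,
`p1 ∦ p2`, `p2 ∦ p3`, `p3 ∦ p4`. -/
def NFree (α : Type*) [PartialOrder α] : Prop :=
  ¬ ∃ p1 p2 p3 p4 : α, p3 < p1 ∧ p4 < p1 ∧ p4 < p2 ∧
      ¬(p1 ≤ p2 ∨ p2 ≤ p1) ∧ ¬(p2 ≤ p3 ∨ p3 ≤ p2) ∧ ¬(p3 ≤ p4 ∨ p4 ≤ p3)

/-- A poset is `V`-free if there are no `p1 < p2`, `p1 < p3` with `p2` incomparable to `p3`. -/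
def VFree (α : Type*) [PartialOrder α] : Prop :=
  ¬ ∃ p1 p2 p3 : α, p1 < p2 ∧ p1 < p3 ∧ ¬(p2 ≤ p3 ∨ p3 ≤ p2)

/-- `ao` of the family `T_n` of all acyclic posets on `n` elements:
the minimum of `ao P` over acyclic posets `P` of size `n`. -/
noncomputable def aoT (n : ℕ) : ℕ :=
  sInf {m | ∃ P : PartialOrder (Fin n),
    @AcyclicPoset (Fin n) P ∧ @ao (Fin n) (Fin.fintype n) P = m}

/-- `Λ(a, h)`: the maximum cardinality of a `V`-free poset `P` with `ao P = a` and
height at most `h`. -/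
noncomputable def Lam (a h : ℕ) : ℕ :=
  sSup {n | ∃ P : PartialOrder (Fin n), @VFree (Fin n) P ∧
    @ao (Fin n) (Fin.fintype n) P = a ∧ @heightP (Fin n) (Fin.fintype n) P ≤ h}

/-- `Λ(a) = Λ(a, a)`. -/
noncomputable def Lambda (a : ℕ) : ℕ := Lam a a

/-- `X(a)`: the maximum cardinality of an acyclic and `N`-free poset `P` with `ao P = a`. -/
noncomputable def Xmax (a : ℕ) : ℕ :=
  sSup {n | ∃ P : PartialOrder (Fin n), @AcyclicPoset (Fin n) P ∧
    @NFree (Fin n) P ∧ @ao (Fin n) (Fin.fintype n) P = a}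

/-!
Write `S n = ∑_{j<n} s₂(j)`, where `s₂` is the binary digit sum. A V-free poset `P` satisfies
`|P| ≤ S(ao P) + h(P)`: if a maximal element `m` is the maximum, delete it (the height drops by
one); otherwise V-freeness makes the down-set of `m` incomparable to its complement, so `P` is a
disjoint sum, `ao` is additive, and `S x + S y + min x y ≤ S (x + y)` pays for the height lost
to the smaller part. Hence `Λ(a) ≤ S a + a`. Placing a chain of `2^k` elements above two disjoint
copies of the level-`k` poset gives `Λ(2^k) ≥ 2^k + S(2^k)`. The theorem then reduces to
`S f + S (2^k - f) + (2^k - f) < S (2^k)`, which follows from `S (2^m + g) = S (2^m) + g + S g`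
and superadditivity applied to `g` and `2^m - g`.
-/

open Finset

def sumDigitsBelow (n : ℕ) : ℕ := ∑ j ∈ range n, (Nat.digits 2 j).sum

lemma digits_two_sum (n : ℕ) : (Nat.digits 2 n).sum = (Nat.digits 2 (n / 2)).sum + n % 2 := by
  rcases n.eq_zero_or_pos with rfl | hn
  · simp
  · rw [Nat.digits_def' one_lt_two hn, List.sum_cons, add_comm]

@[simp] lemma sumDigitsBelow_zero : sumDigitsBelow 0 = 0 := rfl

lemma sumDigitsBelow_succ (n : ℕ) :
    sumDigitsBelow (n + 1) = sumDigitsBelow n + (Nat.digits 2 n).sum :=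
  sum_range_succ _ _

lemma sumDigitsBelow_two_mul (n : ℕ) :
    sumDigitsBelow (2 * n) = 2 * sumDigitsBelow n + n := by
  induction n with
  | zero => rfl
  | succ n ih =>
    have h0 := digits_two_sum (2 * n)
    have h1 := digits_two_sum (2 * n + 1)
    rw [show (2 * n + 1) / 2 = n by omega, show (2 * n + 1) % 2 = 1 by omega] at h1
    rw [Nat.mul_div_cancel_left _ two_pos, Nat.mul_mod_right] at h0
    rw [show 2 * (n + 1) = 2 * n + 1 + 1 by ring, sumDigitsBelow_succ, sumDigitsBelow_succ,
      sumDigitsBelow_succ, ih, h0, h1]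
    ring

lemma sumDigitsBelow_two_mul_add_one (n : ℕ) :
    sumDigitsBelow (2 * n + 1) = sumDigitsBelow n + sumDigitsBelow (n + 1) + n := by
  have h := digits_two_sum (2 * n)
  rw [Nat.mul_div_cancel_left _ two_pos, Nat.mul_mod_right] at h
  rw [sumDigitsBelow_succ, sumDigitsBelow_succ, sumDigitsBelow_two_mul, h]
  ring

lemma sumDigitsBelow_mono : Monotone sumDigitsBelow :=
  fun _ _ h => sum_le_sum_of_subset (range_subset_range.2 h)

theorem sumDigitsBelow_add_add_min_le (x y : ℕ) :
    sumDigitsBelow x + sumDigitsBelow y + min x y ≤ sumDigitsBelow (x + y) := by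
  induction hn : x + y using Nat.strong_induction_on generalizing x y with
  | _ n ih =>
  subst hn
  have ih' {x' y' : ℕ} (h : x' + y' < x + y) := ih _ h x' y' rfl
  rcases x.eq_zero_or_pos with rfl | hx
  · simp
  rcases y.eq_zero_or_pos with rfl | hy
  · simp
  -- halving `x` and `y` turns each parity case into instances of the induction hypothesis
  obtain ⟨a, rfl | rfl⟩ := Nat.even_or_odd' x <;> obtain ⟨b, rfl | rfl⟩ := Nat.even_or_odd' y
  · have := ih' (x' := a) (y' := b) (by omega)
    rw [show 2 * a + 2 * b = 2 * (a + b) by ring]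
    simp only [sumDigitsBelow_two_mul]
    omega
  · have h1 := ih' (x' := a) (y' := b) (by omega)
    have h2 := ih' (x' := a) (y' := b + 1) (by omega)
    rw [show 2 * a + (2 * b + 1) = 2 * (a + b) + 1 by ring]
    simp only [sumDigitsBelow_two_mul, sumDigitsBelow_two_mul_add_one, ← add_assoc] at h2 ⊢
    omega
  · have h1 := ih' (x' := a) (y' := b) (by omega)
    have h2 := ih' (x' := a + 1) (y' := b) (by omega)
    rw [show 2 * a + 1 + 2 * b = 2 * (a + b) + 1 by ring]
    simp only [sumDigitsBelow_two_mul, sumDigitsBelow_two_mul_add_one,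
      show a + 1 + b = a + b + 1 by ring] at h2 ⊢
    omega
  · have h1 := ih' (x' := a) (y' := b + 1) (by omega)
    have h2 := ih' (x' := a + 1) (y' := b) (by omega)
    rw [show 2 * a + 1 + (2 * b + 1) = 2 * (a + b + 1) by ring]
    simp only [sumDigitsBelow_two_mul, sumDigitsBelow_two_mul_add_one, ← add_assoc,
      show a + 1 + b = a + b + 1 by ring] at h1 h2 ⊢
    omega

theorem sumDigitsBelow_two_pow_add (m : ℕ) {r : ℕ} (hr : r ≤ 2 ^ m) :
    sumDigitsBelow (2 ^ m + r) = sumDigitsBelow (2 ^ m) + r + sumDigitsBelow r := by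
  induction m generalizing r with
  | zero =>
    interval_cases r <;> decide
  | succ m ih =>
    have hpow : 2 ^ (m + 1) = 2 * 2 ^ m := by ring
    obtain ⟨s, rfl | rfl⟩ := Nat.even_or_odd' r
    · have := ih (r := s) (by omega)
      rw [hpow, ← mul_add]
      simp only [sumDigitsBelow_two_mul]
      omega
    · have h1 := ih (r := s) (by omega)
      have h2 := ih (r := s + 1) (by omega)
      rw [hpow, show 2 * 2 ^ m + (2 * s + 1) = 2 * (2 ^ m + s) + 1 by ring]
      simp only [sumDigitsBelow_two_mul, sumDigitsBelow_two_mul_add_one, ← add_assoc] at h2 ⊢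
      omega

theorem sumDigitsBelow_add_sub_lt {k f : ℕ} (hf₁ : 2 ^ k < 2 * f) (hf₂ : f < 2 ^ k) :
    sumDigitsBelow f + sumDigitsBelow (2 ^ k - f) + (2 ^ k - f) < sumDigitsBelow (2 ^ k) := by
  obtain ⟨m, rfl⟩ : ∃ m, k = m + 1 := Nat.exists_eq_succ_of_ne_zero (by rintro rfl; omega)
  have hpow : 2 ^ (m + 1) = 2 * 2 ^ m := by ring
  obtain ⟨g, rfl⟩ : ∃ g, f = 2 ^ m + g := ⟨f - 2 ^ m, by omega⟩
  have hsplit := sumDigitsBelow_add_add_min_le g (2 ^ m - g)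
  rw [Nat.add_sub_cancel' (by omega)] at hsplit
  rw [sumDigitsBelow_two_pow_add m (by omega),
    show 2 ^ (m + 1) - (2 ^ m + g) = 2 ^ m - g by omega, hpow, sumDigitsBelow_two_mul]
  omega

section Basic

variable {α β : Type*} [PartialOrder α] [PartialOrder β]

lemma IsChainUnion.mono {U V : Finset α} (hU : IsChainUnion U) (hVU : V ⊆ U) :
    IsChainUnion V :=
  fun x hx y hy z hz => hU x (hVU hx) y (hVU hy) z (hVU hz)

lemma IsChain.isChainUnion {C : Finset α} (hC : IsChain (· ≤ ·) (C : Set α)) :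
    IsChainUnion C := by
  intro x hx _ _ z hz _ _
  rcases eq_or_ne x z with rfl | hxz
  · exact Or.inl le_rfl
  · exact hC hx hz hxz

lemma IsChainUnion.isChain_of_comparable {U : Finset α} (hU : IsChainUnion U) {z : α}
    (hz : z ∈ U) (hcomp : ∀ x ∈ U, x ≤ z ∨ z ≤ x) : IsChain (· ≤ ·) (U : Set α) :=
  fun x hx y hy _ => hU x hx z hz y hy (hcomp x hx) (hcomp y hy).symm

lemma VFree.of_orderEmbedding (f : β ↪o α) (h : VFree α) : VFree β := by
  rintro ⟨p₁, p₂, p₃, h₁₂, h₁₃, hinc⟩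
  exact h ⟨f p₁, f p₂, f p₃, f.strictMono h₁₂, f.strictMono h₁₃, by simpa only [f.le_iff_le]⟩

lemma VFree.of_linearOrder {γ : Type*} [LinearOrder γ] : VFree γ :=
  fun ⟨_, p₂, p₃, _, _, hinc⟩ => hinc (le_total p₂ p₃)

lemma bddAbove_card_finset {γ : Type*} [Fintype γ] (p : Finset γ → Prop) :
    BddAbove {m | ∃ U, p U ∧ U.card = m} :=
  ⟨Fintype.card γ, by rintro _ ⟨U, -, rfl⟩; exact card_le_univ U⟩

variable [Fintype α]

lemma exists_isChainUnion_card_eq_ao : ∃ U : Finset α, IsChainUnion U ∧ U.card = ao α :=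
  Nat.sSup_mem (s := {m | ∃ U : Finset α, IsChainUnion U ∧ U.card = m})
    ⟨0, ∅, by simp [IsChainUnion], card_empty⟩ (bddAbove_card_finset _)

lemma IsChainUnion.card_le_ao {U : Finset α} (hU : IsChainUnion U) : U.card ≤ ao α :=
  le_csSup (bddAbove_card_finset _) ⟨U, hU, rfl⟩

lemma exists_isChain_card_eq_heightP :
    ∃ C : Finset α, IsChain (· ≤ ·) (C : Set α) ∧ C.card = heightP α :=
  Nat.sSup_mem (s := {m | ∃ C : Finset α, IsChain (· ≤ ·) (C : Set α) ∧ C.card = m})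
    ⟨0, ∅, by simp, card_empty⟩ (bddAbove_card_finset _)

lemma IsChain.card_le_heightP {C : Finset α} (hC : IsChain (· ≤ ·) (C : Set α)) :
    C.card ≤ heightP α :=
  le_csSup (bddAbove_card_finset _) ⟨C, hC, rfl⟩

lemma ao_le_card : ao α ≤ Fintype.card α :=
  csSup_le' <| by rintro _ ⟨U, -, rfl⟩; exact card_le_univ U

lemma heightP_le_ao : heightP α ≤ ao α := by
  obtain ⟨C, hC, hcard⟩ := exists_isChain_card_eq_heightP (α := α)
  exact hcard ▸ hC.isChainUnion.card_le_ao

lemma heightP_eq_card {γ : Type*} [Fintype γ] [LinearOrder γ] : heightP γ = Fintype.card γ :=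
  le_antisymm (heightP_le_ao.trans ao_le_card) <| by
    simpa using (isChain_of_trichotomous _ :
      IsChain (· ≤ ·) ((univ : Finset γ) : Set γ)).card_le_heightP

lemma ao_eq_card {γ : Type*} [Fintype γ] [LinearOrder γ] : ao γ = Fintype.card γ :=
  le_antisymm ao_le_card (heightP_eq_card.symm.le.trans heightP_le_ao)

lemma IsChainUnion.card_le_ao_of_subset_range (f : α ↪o β) {U : Finset β}
    (hU : IsChainUnion U) (hUf : ∀ x ∈ U, x ∈ Set.range f) : U.card ≤ ao α := by
  classical
  have hpre : IsChainUnion (U.preimage f f.injective.injOn) := by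
    intro x hx y hy z hz
    simp only [mem_preimage, ← f.le_iff_le] at *
    exact hU _ hx _ hy _ hz
  calc U.card = (U.preimage f f.injective.injOn).card := by
        rw [card_preimage, filter_true_of_mem hUf]
    _ ≤ ao α := hpre.card_le_ao

lemma IsChain.card_le_heightP_of_subset_range (f : α ↪o β) {C : Finset β}
    (hC : IsChain (· ≤ ·) (C : Set β)) (hCf : ∀ x ∈ C, x ∈ Set.range f) :
    C.card ≤ heightP α := by
  classical
  have hpre : IsChain (· ≤ ·) ((C.preimage f f.injective.injOn : Finset α) : Set α) := by
    simpa using hC.preimage_relEmbedding f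
  calc C.card = (C.preimage f f.injective.injOn).card := by
        rw [card_preimage, filter_true_of_mem hCf]
    _ ≤ heightP α := hpre.card_le_heightP

variable [Fintype β]

lemma ao_le_of_orderEmbedding (f : α ↪o β) : ao α ≤ ao β := by
  obtain ⟨U, hU, hcard⟩ := exists_isChainUnion_card_eq_ao (α := α)
  have hmap : IsChainUnion (U.map f.toEmbedding) := by
    intro x hx y hy z hz
    simp only [mem_map, RelEmbedding.coe_toEmbedding] at hx hy hz
    obtain ⟨x, hx, rfl⟩ := hx
    obtain ⟨y, hy, rfl⟩ := hy
    obtain ⟨z, hz, rfl⟩ := hz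
    simpa only [f.le_iff_le] using hU x hx y hy z hz
  simpa [hcard] using hmap.card_le_ao

lemma heightP_le_of_orderEmbedding (f : α ↪o β) : heightP α ≤ heightP β := by
  obtain ⟨C, hC, hcard⟩ := exists_isChain_card_eq_heightP (α := α)
  have hmap : IsChain (· ≤ ·) ((C.map f.toEmbedding : Finset β) : Set β) := by
    simpa using hC.image f
  simpa [hcard] using hmap.card_le_heightP

lemma ao_congr (e : α ≃o β) : ao α = ao β :=
  le_antisymm (ao_le_of_orderEmbedding e.toOrderEmbedding)
    (ao_le_of_orderEmbedding e.symm.toOrderEmbedding)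

lemma heightP_congr (e : α ≃o β) : heightP α = heightP β :=
  le_antisymm (heightP_le_of_orderEmbedding e.toOrderEmbedding)
    (heightP_le_of_orderEmbedding e.symm.toOrderEmbedding)

end Basic

section Sum

variable {α β : Type*} [PartialOrder α] [PartialOrder β]

def Sum.inlOrderEmbedding : α ↪o α ⊕ β := RelEmbedding.sumLiftRelInl _ _

def Sum.inrOrderEmbedding : β ↪o α ⊕ β := RelEmbedding.sumLiftRelInr _ _

lemma VFree.sum (hα : VFree α) (hβ : VFree β) : VFree (α ⊕ β) := by
  rintro ⟨p₁ | p₁, p₂ | p₂, p₃ | p₃, h₁₂, h₁₃, hinc⟩ <;> simp only [Sum.inl_lt_inl_iff,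
    Sum.inr_lt_inr_iff, Sum.not_inl_lt_inr, Sum.not_inr_lt_inl] at h₁₂ h₁₃
  · exact hα ⟨p₁, p₂, p₃, h₁₂, h₁₃, by simpa using hinc⟩
  · exact hβ ⟨p₁, p₂, p₃, h₁₂, h₁₃, by simpa using hinc⟩

variable [Fintype α] [Fintype β]

lemma ao_sum : ao (α ⊕ β) = ao α + ao β := by
  classical
  apply le_antisymm
  · obtain ⟨U, hU, hcard⟩ := exists_isChainUnion_card_eq_ao (α := α ⊕ β)
    rw [← hcard, ← card_filter_add_card_filter_not fun x => x.isLeft]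
    refine add_le_add
      ((hU.mono (filter_subset _ _)).card_le_ao_of_subset_range Sum.inlOrderEmbedding
        fun x hx => let ⟨a, ha⟩ := Sum.isLeft_iff.1 (mem_filter.1 hx).2; ⟨a, ha.symm⟩)
      ((hU.mono (filter_subset _ _)).card_le_ao_of_subset_range Sum.inrOrderEmbedding
        fun x hx => by
          obtain ⟨b, hb⟩ := Sum.isRight_iff.1 (by simpa using (mem_filter.1 hx).2)
          exact ⟨b, hb.symm⟩)
  · obtain ⟨U, hU, hUcard⟩ := exists_isChainUnion_card_eq_ao (α := α)
    obtain ⟨V, hV, hVcard⟩ := exists_isChainUnion_card_eq_ao (α := β)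
    have hUV : IsChainUnion (U.disjSum V) := by
      rintro (x | x) hx (y | y) hy (z | z) hz hxy hyz <;>
        simp only [inl_mem_disjSum, inr_mem_disjSum, Sum.inl_le_inl_iff, Sum.inr_le_inr_iff,
          Sum.not_inl_le_inr, Sum.not_inr_le_inl, or_self] at hx hy hz hxy hyz ⊢
      exacts [hU x hx y hy z hz hxy hyz, hV x hx y hy z hz hxy hyz]
    simpa [hUcard, hVcard] using hUV.card_le_ao

lemma heightP_sum : heightP (α ⊕ β) = max (heightP α) (heightP β) := by
  refine le_antisymm ?_ (max_le (heightP_le_of_orderEmbedding Sum.inlOrderEmbedding)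
    (heightP_le_of_orderEmbedding Sum.inrOrderEmbedding))
  obtain ⟨C, hC, hcard⟩ := exists_isChain_card_eq_heightP (α := α ⊕ β)
  rcases C.eq_empty_or_nonempty with rfl | ⟨x₀, hx₀⟩
  · simp [← hcard]
  have hside : ∀ x ∈ C, x.isLeft = x₀.isLeft := by
    intro x hx
    rcases eq_or_ne x x₀ with rfl | hne
    · rfl
    rcases hC hx hx₀ hne with h | h
    · exact Bool.eq_iff_iff.2 (Sum.LiftRel.isLeft_congr h)
    · exact (Bool.eq_iff_iff.2 (Sum.LiftRel.isLeft_congr h)).symm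
  rw [← hcard]
  cases hx₀l : x₀.isLeft
  · refine le_max_of_le_right (hC.card_le_heightP_of_subset_range Sum.inrOrderEmbedding ?_)
    intro x hx
    obtain ⟨b, rfl⟩ := Sum.isRight_iff.1 (by simpa [hx₀l] using hside x hx)
    exact ⟨b, rfl⟩
  · refine le_max_of_le_left (hC.card_le_heightP_of_subset_range Sum.inlOrderEmbedding ?_)
    intro x hx
    obtain ⟨a, rfl⟩ := Sum.isLeft_iff.1 (by simpa [hx₀l] using hside x hx)
    exact ⟨a, rfl⟩

end Sum

section SumLex

variable {α β : Type*} [PartialOrder α] [LinearOrder β]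

def Sum.inlLexOrderEmbedding : α ↪o α ⊕ₗ β := RelEmbedding.sumLexInl _ _

def Sum.inrLexOrderEmbedding : β ↪o α ⊕ₗ β := RelEmbedding.sumLexInr _ _

@[simp] lemma Sum.inlLexOrderEmbedding_apply (a : α) :
    (Sum.inlLexOrderEmbedding a : α ⊕ₗ β) = toLex (inl a) := rfl

@[simp] lemma Sum.inrLexOrderEmbedding_apply (b : β) :
    (Sum.inrLexOrderEmbedding b : α ⊕ₗ β) = toLex (inr b) := rfl

lemma Sum.Lex.le_or_le_inr (x : α ⊕ₗ β) (b : β) : x ≤ toLex (inr b) ∨ toLex (inr b) ≤ x := by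
  rcases x with a | b'
  · exact Or.inl (Sum.Lex.inl_le_inr a b)
  · exact (le_total b' b).imp Sum.Lex.inr_le_inr_iff.2 Sum.Lex.inr_le_inr_iff.2

lemma VFree.sumLex (hα : VFree α) : VFree (α ⊕ₗ β) := by
  rintro ⟨p₁, p₂, p₃ | p₃, h₁₂, h₁₃, hinc⟩
  · rcases p₂ with p₂ | p₂
    · rcases p₁ with p₁ | p₁
      · exact hα ⟨p₁, p₂, p₃, Sum.Lex.inl_lt_inl_iff.1 h₁₂, Sum.Lex.inl_lt_inl_iff.1 h₁₃,
          fun h => hinc (h.imp Sum.Lex.inl_le_inl_iff.2 Sum.Lex.inl_le_inl_iff.2)⟩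
      · exact Sum.Lex.not_inr_lt_inl h₁₂
    · exact hinc (Sum.Lex.le_or_le_inr _ p₂).symm
  · exact hinc (Sum.Lex.le_or_le_inr _ p₃)

variable [Fintype α] [Fintype β]

lemma heightP_sumLex : heightP (α ⊕ₗ β) = heightP α + Fintype.card β := by
  classical
  apply le_antisymm
  · obtain ⟨C, hC, hcard⟩ := exists_isChain_card_eq_heightP (α := α ⊕ₗ β)
    rw [← hcard, ← card_filter_add_card_filter_not fun x => (ofLex x).isLeft,
      ← heightP_eq_card (γ := β)]
    have hsub {p : α ⊕ₗ β → Prop} [DecidablePred p] :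
        IsChain (· ≤ ·) ((C.filter p : Finset (α ⊕ₗ β)) : Set (α ⊕ₗ β)) :=
      hC.mono (coe_subset.2 (filter_subset _ _))
    refine add_le_add
      (hsub.card_le_heightP_of_subset_range Sum.inlLexOrderEmbedding
        fun x hx => let ⟨a, ha⟩ := Sum.isLeft_iff.1 (mem_filter.1 hx).2; ⟨a, ha.symm⟩)
      (hsub.card_le_heightP_of_subset_range Sum.inrLexOrderEmbedding fun x hx => by
        obtain ⟨b, hb⟩ := (Sum.isRight_iff (x := ofLex x)).1 (by simpa using (mem_filter.1 hx).2)
        exact ⟨b, hb.symm⟩)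
  · obtain ⟨C, hC, hcard⟩ := exists_isChain_card_eq_heightP (α := α)
    have hdisj : Disjoint (C.map Sum.inlLexOrderEmbedding.toEmbedding)
        (univ.map (Sum.inrLexOrderEmbedding (α := α) (β := β)).toEmbedding) := by
      simp [disjoint_left]
    have hD : IsChain (· ≤ ·) ((C.map Sum.inlLexOrderEmbedding.toEmbedding ∪
        univ.map Sum.inrLexOrderEmbedding.toEmbedding : Finset (α ⊕ₗ β)) : Set (α ⊕ₗ β)) := by
      rw [coe_union, isChain_union]
      have hβ := (isChain_of_trichotomous Set.univ).image
        (Sum.inrLexOrderEmbedding (α := α) (β := β))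
      refine ⟨by simpa using hC.image Sum.inlLexOrderEmbedding, by simpa using hβ, ?_⟩
      simp only [coe_map, Set.mem_image, mem_coe]
      rintro _ ⟨a, -, rfl⟩ _ ⟨b, -, rfl⟩ -
      exact Or.inl (Sum.Lex.inl_le_inr a b)
    simpa [card_union_of_disjoint hdisj, hcard] using hD.card_le_heightP

lemma ao_sumLex : ao (α ⊕ₗ β) = max (ao α) (heightP α + Fintype.card β) := by
  refine le_antisymm ?_ (max_le (ao_le_of_orderEmbedding Sum.inlLexOrderEmbedding)
    (by rw [← heightP_sumLex]; exact heightP_le_ao))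
  obtain ⟨U, hU, hcard⟩ := exists_isChainUnion_card_eq_ao (α := α ⊕ₗ β)
  rw [← hcard]
  by_cases hl : ∀ x ∈ U, x ∈ Set.range Sum.inlLexOrderEmbedding
  · exact le_max_of_le_left (hU.card_le_ao_of_subset_range _ hl)
  push Not at hl
  obtain ⟨x₀, hx₀, hx₀l⟩ := hl
  rcases x₀ with a | b
  · exact absurd ⟨a, rfl⟩ hx₀l
  rw [← heightP_sumLex]
  exact le_max_of_le_right
    (hU.isChain_of_comparable hx₀ fun x _ => Sum.Lex.le_or_le_inr x b).card_le_heightP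

end SumLex

section Bound

variable {α β γ : Type*} [PartialOrder α] [PartialOrder β] [PartialOrder γ]

lemma VFree.not_le_of_le_of_isMax (hV : VFree α) {m x y : α} (hm : IsMax m) (hx : x ≤ m)
    (hy : ¬ y ≤ m) : ¬ x ≤ y := by
  intro hxy
  have hxy' : x < y := lt_of_le_of_ne hxy (by rintro rfl; exact hy hx)
  rcases hx.lt_or_eq with hxm | rfl
  · exact hV ⟨x, m, y, hxm, hxy', fun h => h.elim (fun hmy => hy (hm hmy)) hy⟩
  · exact hy (hm hxy)

def OrderIso.sumComplOfIncomparable (p : α → Prop) [DecidablePred p]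
    (h : ∀ x y, p x → ¬ p y → ¬ x ≤ y ∧ ¬ y ≤ x) : {x // p x} ⊕ {x // ¬ p x} ≃o α where
  toEquiv := Equiv.sumCompl p
  map_rel_iff' := by
    rintro (a | a) (b | b) <;> simp only [Equiv.sumCompl_apply_inl, Equiv.sumCompl_apply_inr,
      Sum.inl_le_inl_iff, Sum.inr_le_inr_iff, Sum.not_inl_le_inr, Sum.not_inr_le_inl,
      Subtype.coe_le_coe, iff_false]
    exacts [(h a b a.2 b.2).1, (h b a b.2 a.2).2]

lemma succ_heightP_subtype_ne_le [Fintype α] [DecidableEq α] {m : α} (hm : ∀ x, x ≤ m) :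
    heightP {x // x ≠ m} + 1 ≤ heightP α := by
  obtain ⟨C, hC, hcard⟩ := exists_isChain_card_eq_heightP (α := {x // x ≠ m})
  let f : {x // x ≠ m} ↪o α := OrderEmbedding.subtype _
  have hm_notMem : m ∉ C.map f.toEmbedding := by simp [f]
  have hchain : IsChain (· ≤ ·) ((insert m (C.map f.toEmbedding) : Finset α) : Set α) := by
    rw [coe_insert]
    exact (by simpa using hC.image f : IsChain (· ≤ ·) _).insert fun b _ _ => Or.inr (hm b)
  simpa [card_insert_of_notMem hm_notMem, hcard] using hchain.card_le_heightP

lemma card_sum_le_sumDigitsBelow_ao_add_heightP [Fintype β] [Fintype γ]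
    (hβ : Fintype.card β ≤ sumDigitsBelow (ao β) + heightP β)
    (hγ : Fintype.card γ ≤ sumDigitsBelow (ao γ) + heightP γ) :
    Fintype.card (β ⊕ γ) ≤ sumDigitsBelow (ao (β ⊕ γ)) + heightP (β ⊕ γ) := by
  have hsplit := sumDigitsBelow_add_add_min_le (ao β) (ao γ)
  have := heightP_le_ao (α := β)
  have := heightP_le_ao (α := γ)
  rw [Fintype.card_sum, ao_sum, heightP_sum]
  omega

theorem VFree.card_le_sumDigitsBelow_ao_add_heightP [Fintype α] (hV : VFree α) :
    Fintype.card α ≤ sumDigitsBelow (ao α) + heightP α := by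
  classical
  induction hn : Fintype.card α using Nat.strong_induction_on generalizing α with
  | _ n ih =>
  rcases isEmpty_or_nonempty α with hα | hα
  · simp [← hn]
  obtain ⟨m, hm⟩ := (univ : Finset α).exists_maximal univ_nonempty
  replace hm : IsMax m := fun x hx => hm.2 (mem_univ x) hx
  by_cases htop : ∀ x, x ≤ m
  · have hcard : Fintype.card {x // x ≠ m} + 1 = n := by
      rw [Fintype.card_subtype_compl, Fintype.card_subtype_eq, ← hn]
      exact Nat.sub_add_cancel Fintype.card_pos
    have hsub := ih _ (by omega) (hV.of_orderEmbedding (OrderEmbedding.subtype (· ≠ m))) rfl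
    have hao := sumDigitsBelow_mono (ao_le_of_orderEmbedding (OrderEmbedding.subtype (· ≠ m)))
    have := succ_heightP_subtype_ne_le htop
    omega
  · push Not at htop
    obtain ⟨y, hy⟩ := htop
    let e := OrderIso.sumComplOfIncomparable (· ≤ m) fun x y hx hy =>
      ⟨hV.not_le_of_le_of_isMax hm hx hy, fun h => hy (h.trans hx)⟩
    have hcard := Fintype.card_congr e.toEquiv
    have hpos₁ : 0 < Fintype.card {x // x ≤ m} := Fintype.card_pos_iff.2 ⟨⟨m, le_rfl⟩⟩
    have hpos₂ : 0 < Fintype.card {x // ¬ x ≤ m} := Fintype.card_pos_iff.2 ⟨⟨y, hy⟩⟩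
    rw [Fintype.card_sum, hn] at hcard
    have hsum := card_sum_le_sumDigitsBelow_ao_add_heightP
      (ih (Fintype.card {x // x ≤ m}) (by omega)
        (hV.of_orderEmbedding (OrderEmbedding.subtype _)) rfl)
      (ih (Fintype.card {x // ¬ x ≤ m}) (by omega)
        (hV.of_orderEmbedding (OrderEmbedding.subtype _)) rfl)
    rwa [Fintype.card_congr e.toEquiv, ao_congr e, heightP_congr e, hn] at hsum

end Bound

lemma le_sumDigitsBelow_add_of_mem_Lam {a h n : ℕ}
    (hn : ∃ P : PartialOrder (Fin n), @VFree (Fin n) P ∧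
      @ao (Fin n) (Fin.fintype n) P = a ∧ @heightP (Fin n) (Fin.fintype n) P ≤ h) :
    n ≤ sumDigitsBelow a + h := by
  obtain ⟨P, hV, rfl, hh⟩ := hn
  simpa using (hV.card_le_sumDigitsBelow_ao_add_heightP).trans (Nat.add_le_add_left hh _)

lemma Lam_le_sumDigitsBelow_add (a h : ℕ) : Lam a h ≤ sumDigitsBelow a + h :=
  csSup_le' fun _ => le_sumDigitsBelow_add_of_mem_Lam

lemma VFree.exists_partialOrder_of_equiv {α δ : Type*} [Fintype α] [PartialOrder α] [Fintype δ]
    (hV : VFree α) (e : δ ≃ α) :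
    ∃ P : PartialOrder δ, @VFree δ P ∧ @ao δ _ P = ao α ∧ @heightP δ _ P = heightP α := by
  let P : PartialOrder δ := PartialOrder.lift e e.injective
  let φ : δ ≃o α := ⟨e, Iff.rfl⟩
  exact ⟨P, hV.of_orderEmbedding φ.toOrderEmbedding, ao_congr φ, heightP_congr φ⟩

lemma VFree.card_le_Lam {α : Type*} [Fintype α] [PartialOrder α] (hV : VFree α) {h : ℕ}
    (hh : heightP α ≤ h) : Fintype.card α ≤ Lam (ao α) h := by
  obtain ⟨P, hVP, haoP, hhP⟩ := hV.exists_partialOrder_of_equiv (Fintype.equivFin α).symm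
  exact le_csSup ⟨_, fun _ => le_sumDigitsBelow_add_of_mem_Lam⟩ ⟨P, hVP, haoP, hhP.trans_le hh⟩

def doublingPoset : ℕ → Type
  | 0 => Fin 1
  | k + 1 => (doublingPoset k ⊕ doublingPoset k) ⊕ₗ Fin (2 ^ k)

instance instPartialOrderDoublingPoset : ∀ k, PartialOrder (doublingPoset k)
  | 0 => inferInstanceAs (PartialOrder (Fin 1))
  | k + 1 =>
    letI := instPartialOrderDoublingPoset k
    inferInstanceAs (PartialOrder ((doublingPoset k ⊕ doublingPoset k) ⊕ₗ Fin (2 ^ k)))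

instance instFintypeDoublingPoset : ∀ k, Fintype (doublingPoset k)
  | 0 => inferInstanceAs (Fintype (Fin 1))
  | k + 1 =>
    letI := instFintypeDoublingPoset k
    inferInstanceAs (Fintype ((doublingPoset k ⊕ doublingPoset k) ⊕ₗ Fin (2 ^ k)))

lemma vFree_doublingPoset (k : ℕ) : VFree (doublingPoset k) := by
  induction k with
  | zero => exact VFree.of_linearOrder (γ := Fin 1)
  | succ k ih => exact (ih.sum ih).sumLex (β := Fin (2 ^ k))

lemma heightP_doublingPoset (k : ℕ) : heightP (doublingPoset k) = 2 ^ k := by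
  induction k with
  | zero => exact heightP_eq_card (γ := Fin 1)
  | succ k ih =>
    change heightP ((doublingPoset k ⊕ doublingPoset k) ⊕ₗ Fin (2 ^ k)) = _
    rw [heightP_sumLex, heightP_sum, ih, max_self, Fintype.card_fin, pow_succ]
    ring

lemma ao_doublingPoset (k : ℕ) : ao (doublingPoset k) = 2 ^ k := by
  induction k with
  | zero => exact ao_eq_card (γ := Fin 1)
  | succ k ih =>
    change ao ((doublingPoset k ⊕ doublingPoset k) ⊕ₗ Fin (2 ^ k)) = _
    rw [ao_sumLex, ao_sum, heightP_sum, ih, heightP_doublingPoset, max_self, Fintype.card_fin,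
      max_self, pow_succ]
    ring

lemma card_doublingPoset (k : ℕ) :
    Fintype.card (doublingPoset k) = 2 ^ k + sumDigitsBelow (2 ^ k) := by
  induction k with
  | zero => rfl
  | succ k ih =>
    change Fintype.card ((doublingPoset k ⊕ doublingPoset k) ⊕ₗ Fin (2 ^ k)) = _
    rw [Fintype.card_lex, Fintype.card_sum, Fintype.card_sum, ih, Fintype.card_fin, pow_succ,
      mul_comm, sumDigitsBelow_two_mul]
    ring

theorem Lambda_strict_below_pow_general (k f : ℕ)
    (hf1 : 2 ^ k < 2 * f) (hf2 : f < 2 ^ k) :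
    Lambda f + Lambda (2 ^ k - f) + (2 ^ k - f) < Lambda (2 ^ k) := by
  have hf := Lam_le_sumDigitsBelow_add f f
  have hg := Lam_le_sumDigitsBelow_add (2 ^ k - f) (2 ^ k - f)
  have hD := (vFree_doublingPoset k).card_le_Lam (heightP_doublingPoset k).le
  rw [ao_doublingPoset, card_doublingPoset] at hD
  have := sumDigitsBelow_add_sub_lt hf1 hf2
  unfold Lambda
  omega

/-- for `a = 2^k` with `k ≥ 1` and `a/2 < f < a`,
`Λ(f) + Λ(a−f) + (a−f) < Λ(a)`. -/
theorem Lambda_strict_below_pow (k f : ℕ) (hk : 1 ≤ k)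
    (hf1 : 2 ^ k < 2 * f) (hf2 : f < 2 ^ k) :
    Lambda f + Lambda (2 ^ k - f) + (2 ^ k - f) < Lambda (2 ^ k) :=
  Lambda_strict_below_pow_general k f hf1 hf2
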